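/- arXiv:1909.02676 — 2 statements merged into one kernel-verified Lean document; each statement's English description precedes it below -/
import Mathlib

section
/- Let n ≥ 1, let σ be a permutation of {1,…,n} with permutation matrix P = P_σ, and let k ∈ SO(n,ℝ). The following are equivalent: (a) there exist a unit lower triangular matrix l with P l P⁻¹ unit upper triangular, a diagonal matrix a with strictly positive diagonal entries, and a unit upper triangular matrix m such that l = k·a·m; (b) k = u·l₀ for some u upper triangular with positive diagonal and l₀ unit lower triangular, AND P k P⁻¹ = u′·l′ for some u′ upper triangular with positive diagonal and some unit lower triangular l′ such that P⁻¹ l′ P is unit upper triangular. -/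
/-! Conjugation by `P_σ` only permutes rows and columns: `P_σ M P_σ⁻¹ = M.submatrix σ⁻¹ σ⁻¹`.
The key fact is that for `c` upper triangular with positive diagonal and any permutation `τ`,
the LU factorization `c.submatrix τ τ = L * B` has a unit lower factor `L` that becomes unit
upper once the permutation is undone. Indeed, Gaussian elimination on `c.submatrix τ τ` is
elimination on `c` with pivots taken in the order `τ`; the Schur complement of an upper
triangular matrix at a diagonal pivot is again upper triangular, so the multiplier in position
`(i, j)` vanishes whenever `τ j < τ i`.

(a) ⇒ (b): with `c = a m` we have `k = l c⁻¹`, and orthogonality gives `k = (kᵀ)⁻¹ = (l⁻¹)ᵀ cᵀ`,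
upper times lower; moreover `P k P⁻¹ = (P l P⁻¹)(P c⁻¹ P⁻¹)`, and the key fact (for `c⁻¹`)
factors the second term as upper times a lower `l'` with `P⁻¹ l' P` unit upper.
(b) ⇒ (a): `k = (P⁻¹ u' P)(P⁻¹ l' P)`; the key fact gives `P⁻¹ u' P = L B`, so
`L = k (B P⁻¹ l' P)⁻¹`, and the last factor is upper triangular with positive diagonal, i.e.
a positive diagonal matrix times a unit upper one. -/
open Matrix

/-- The permutation matrix of `σ`: `(P_σ)_{ab} = 1` if `a = σ b`, else `0`. -/
def permMat {n : ℕ} (σ : Equiv.Perm (Fin n)) : Matrix (Fin n) (Fin n) ℝ :=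
  Matrix.of fun a b => if a = σ b then (1 : ℝ) else 0

/-- Unit lower triangular: `1`s on the diagonal, `0`s above it. -/
def IsUnitLower {n : ℕ} (M : Matrix (Fin n) (Fin n) ℝ) : Prop :=
  (∀ i, M i i = 1) ∧ ∀ i j : Fin n, i < j → M i j = 0

/-- Unit upper triangular: `1`s on the diagonal, `0`s below it. -/
def IsUnitUpper {n : ℕ} (M : Matrix (Fin n) (Fin n) ℝ) : Prop :=
  (∀ i, M i i = 1) ∧ ∀ i j : Fin n, j < i → M i j = 0

/-- Upper triangular with strictly positive diagonal entries. -/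
def IsUpperPos {n : ℕ} (M : Matrix (Fin n) (Fin n) ℝ) : Prop :=
  (∀ i j : Fin n, j < i → M i j = 0) ∧ ∀ i, 0 < M i i

/-- Diagonal with strictly positive diagonal entries. -/
def IsPosDiagonal {n : ℕ} (M : Matrix (Fin n) (Fin n) ℝ) : Prop :=
  (∀ i j : Fin n, i ≠ j → M i j = 0) ∧ ∀ i, 0 < M i i

/-- `SO(n,ℝ)`. -/
def IsSO {n : ℕ} (k : Matrix (Fin n) (Fin n) ℝ) : Prop :=
  kᵀ * k = 1 ∧ k.det = 1

section Triangular

variable {n : ℕ} {M N : Matrix (Fin n) (Fin n) ℝ}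

lemma mul_apply_self_of_isUpperTriangular (hM : M.IsUpperTriangular) (hN : N.IsUpperTriangular)
    (i : Fin n) : (M * N) i i = M i i * N i i := by
  rw [mul_apply, Finset.sum_eq_single i]
  · intro k _ hk
    rcases hk.lt_or_gt with h | h
    · rw [hM h, zero_mul]
    · rw [hN h, mul_zero]
  · simp

lemma IsUpperPos.isUpperTriangular (h : IsUpperPos M) : M.IsUpperTriangular :=
  fun i j hij => h.1 i j hij

lemma IsUnitUpper.isUpperPos (h : IsUnitUpper M) : IsUpperPos M :=
  ⟨h.2, fun i => by rw [h.1]; exact one_pos⟩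

lemma IsPosDiagonal.isUpperPos (h : IsPosDiagonal M) : IsUpperPos M :=
  ⟨fun i j hij => h.1 i j hij.ne', h.2⟩

lemma IsPosDiagonal.transpose (h : IsPosDiagonal M) : IsPosDiagonal Mᵀ :=
  ⟨fun i j hij => h.1 j i hij.symm, h.2⟩

lemma IsUnitLower.transpose (h : IsUnitLower M) : IsUnitUpper Mᵀ :=
  ⟨h.1, fun i j hij => h.2 j i hij⟩

lemma IsUnitUpper.transpose (h : IsUnitUpper M) : IsUnitLower Mᵀ :=
  ⟨h.1, fun i j hij => h.2 j i hij⟩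

lemma IsUpperPos.mul (hM : IsUpperPos M) (hN : IsUpperPos N) : IsUpperPos (M * N) :=
  ⟨fun _ _ hij => hM.isUpperTriangular.mul hN.isUpperTriangular hij, fun i => by
    rw [mul_apply_self_of_isUpperTriangular hM.isUpperTriangular hN.isUpperTriangular]
    exact mul_pos (hM.2 i) (hN.2 i)⟩

lemma IsUpperPos.isUnit_det (h : IsUpperPos M) : IsUnit M.det := by
  rw [det_of_isUpperTriangular h.isUpperTriangular]
  exact (Finset.prod_pos fun i _ => h.2 i).ne'.isUnit

lemma IsUpperPos.isUpperTriangular_inv (h : IsUpperPos M) : M⁻¹.IsUpperTriangular :=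
  have := M.invertibleOfIsUnitDet h.isUnit_det
  blockTriangular_inv_of_blockTriangular h.isUpperTriangular

lemma IsUpperPos.inv_apply_self (h : IsUpperPos M) (i : Fin n) : M⁻¹ i i = (M i i)⁻¹ := by
  have hi := congrFun (congrFun (mul_nonsing_inv M h.isUnit_det) i) i
  rw [mul_apply_self_of_isUpperTriangular h.isUpperTriangular h.isUpperTriangular_inv,
    one_apply_eq] at hi
  exact eq_inv_of_mul_eq_one_right hi

lemma IsUpperPos.inv (h : IsUpperPos M) : IsUpperPos M⁻¹ :=
  ⟨fun _ _ hij => h.isUpperTriangular_inv hij, fun i => by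
    rw [h.inv_apply_self]; exact inv_pos.2 (h.2 i)⟩

lemma IsUnitUpper.inv (h : IsUnitUpper M) : IsUnitUpper M⁻¹ :=
  ⟨fun i => by rw [h.isUpperPos.inv_apply_self, h.1, inv_one], h.isUpperPos.inv.1⟩

lemma IsUnitLower.inv (h : IsUnitLower M) : IsUnitLower M⁻¹ := by
  simpa [transpose_nonsing_inv] using h.transpose.inv.transpose

lemma isPosDiagonal_diagonal {d : Fin n → ℝ} (hd : ∀ i, 0 < d i) : IsPosDiagonal (diagonal d) :=
  ⟨fun _ _ hij => diagonal_apply_ne _ hij, fun i => by rw [diagonal_apply_eq]; exact hd i⟩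

lemma IsUpperPos.exists_posDiagonal_mul_unitUpper (h : IsUpperPos M) :
    ∃ d m, IsPosDiagonal d ∧ IsUnitUpper m ∧ M = d * m := by
  refine ⟨diagonal fun i => M i i, diagonal (fun i => (M i i)⁻¹) * M,
    isPosDiagonal_diagonal h.2, ⟨fun i => ?_, fun i j hij => ?_⟩, ?_⟩
  · rw [diagonal_mul, inv_mul_cancel₀ (h.2 i).ne']
  · rw [diagonal_mul, h.1 i j hij, mul_zero]
  · rw [← mul_assoc, diagonal_mul_diagonal]
    simp [fun i => mul_inv_cancel₀ (h.2 i).ne']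

lemma IsUpperPos.exists_unitUpper_mul_posDiagonal (h : IsUpperPos M) :
    ∃ m d, IsUnitUpper m ∧ IsPosDiagonal d ∧ M = m * d := by
  refine ⟨M * diagonal (fun i => (M i i)⁻¹), diagonal fun i => M i i,
    ⟨fun i => ?_, fun i j hij => ?_⟩, isPosDiagonal_diagonal h.2, ?_⟩
  · rw [mul_diagonal, mul_inv_cancel₀ (h.2 i).ne']
  · rw [mul_diagonal, h.1 i j hij, zero_mul]
  · rw [mul_assoc, diagonal_mul_diagonal]
    simp [fun i => inv_mul_cancel₀ (h.2 i).ne']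

lemma IsUnitLower.isUnit_det (h : IsUnitLower M) : IsUnit M.det := by
  simpa using h.transpose.isUpperPos.isUnit_det

end Triangular

section PermMat

variable {n : ℕ}

lemma permMat_eq_submatrix_one (σ : Equiv.Perm (Fin n)) :
    permMat σ = (1 : Matrix (Fin n) (Fin n) ℝ).submatrix id σ := by
  ext a b
  simp [permMat, one_apply]

lemma permMat_mul (σ : Equiv.Perm (Fin n)) (M : Matrix (Fin n) (Fin n) ℝ) :
    permMat σ * M = M.submatrix σ.symm id := by
  rw [permMat_eq_submatrix_one, one_submatrix_mul]; rfl

lemma mul_permMat (σ : Equiv.Perm (Fin n)) (M : Matrix (Fin n) (Fin n) ℝ) :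
    M * permMat σ = M.submatrix id σ := by
  ext a b
  simp [permMat, mul_apply]

lemma inv_permMat (σ : Equiv.Perm (Fin n)) : (permMat σ)⁻¹ = permMat σ⁻¹ :=
  inv_eq_right_inv <| by rw [permMat_mul, permMat_eq_submatrix_one]; simp

lemma permMat_mul_mul_inv (σ : Equiv.Perm (Fin n)) (M : Matrix (Fin n) (Fin n) ℝ) :
    permMat σ * M * (permMat σ)⁻¹ = M.submatrix ⇑σ⁻¹ ⇑σ⁻¹ := by
  rw [inv_permMat, permMat_mul, mul_permMat]; rfl

lemma inv_permMat_mul_mul (σ : Equiv.Perm (Fin n)) (M : Matrix (Fin n) (Fin n) ℝ) :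
    (permMat σ)⁻¹ * M * permMat σ = M.submatrix ⇑σ ⇑σ := by
  rw [inv_permMat, permMat_mul, mul_permMat]; rfl

end PermMat

section Bordered

variable {n : ℕ} {M : Matrix (Fin n) (Fin n) ℝ}

def bordered (x : ℝ) (r c : Fin n → ℝ) (M : Matrix (Fin n) (Fin n) ℝ) :
    Matrix (Fin (n + 1)) (Fin (n + 1)) ℝ :=
  of (Fin.cons (Fin.cons x r) fun i => Fin.cons (c i) (M i))

lemma IsUnitLower.bordered (h : IsUnitLower M) (c : Fin n → ℝ) :
    IsUnitLower (bordered 1 0 c M) := by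
  refine ⟨fun i => ?_, fun i j hij => ?_⟩
  · cases i using Fin.cases <;> simp [_root_.bordered, h.1]
  · cases j using Fin.cases with
    | zero => exact absurd hij (Fin.not_lt_zero i)
    | succ j =>
      cases i using Fin.cases with
      | zero => simp [_root_.bordered]
      | succ i => simpa [_root_.bordered] using h.2 i j (Fin.succ_lt_succ_iff.1 hij)

lemma IsUpperPos.bordered (h : IsUpperPos M) {x : ℝ} (hx : 0 < x) (r : Fin n → ℝ) :
    IsUpperPos (bordered x r 0 M) := by
  refine ⟨fun i j hij => ?_, fun i => ?_⟩
  · cases i using Fin.cases with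
    | zero => exact absurd hij (Fin.not_lt_zero j)
    | succ i =>
      cases j using Fin.cases with
      | zero => simp [_root_.bordered]
      | succ j => simpa [_root_.bordered] using h.1 i j (Fin.succ_lt_succ_iff.1 hij)
  · cases i using Fin.cases with
    | zero => simpa [_root_.bordered] using hx
    | succ i => simpa [_root_.bordered] using h.2 i

end Bordered

section LU

variable {ι : Type*} [LinearOrder ι]

noncomputable def schurComplementAt (u : Matrix ι ι ℝ) (a : ι) : Matrix ι ι ℝ :=
  of fun x y => u x y - u x a * u a y / u a a

lemma isUpperTriangular_schurComplementAt {u : Matrix ι ι ℝ} (hu : u.IsUpperTriangular) (a : ι) :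
    (schurComplementAt u a).IsUpperTriangular := by
  intro x y hyx
  have : u x a * u a y = 0 := by
    rcases lt_or_ge a x with hax | hxa
    · rw [hu hax, zero_mul]
    · rw [hu (hyx.trans_le hxa), mul_zero]
  simp only [schurComplementAt, of_apply, hu hyx, this, zero_div, sub_zero]

lemma schurComplementAt_apply_self {u : Matrix ι ι ℝ} (hu : u.IsUpperTriangular) {a x : ι}
    (hx : x ≠ a) : schurComplementAt u a x x = u x x := by
  have : u x a * u a x = 0 := by
    rcases hx.lt_or_gt with hxa | hax
    · rw [hu hxa, mul_zero]
    · rw [hu hax, zero_mul]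
  simp [schurComplementAt, this]

theorem exists_submatrix_eq_unitLower_mul_upperPos_of_injective :
    ∀ {n : ℕ} (u : Matrix ι ι ℝ) (e : Fin n → ι), u.IsUpperTriangular → Function.Injective e →
      (∀ i, 0 < u (e i) (e i)) →
      ∃ L B : Matrix (Fin n) (Fin n) ℝ, IsUnitLower L ∧ (∀ i j, j < i → e j < e i → L i j = 0) ∧
        IsUpperPos B ∧ u.submatrix e e = L * B
  | 0, _, _, _, _, _ => ⟨1, 1, ⟨finZeroElim, finZeroElim⟩, finZeroElim, ⟨finZeroElim, finZeroElim⟩,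
      Subsingleton.elim _ _⟩
  | n + 1, u, e, hu, he, hpos => by
    have hp : 0 < u (e 0) (e 0) := hpos 0
    obtain ⟨L', B', hL', hpat', hB', hfac'⟩ :=
      exists_submatrix_eq_unitLower_mul_upperPos_of_injective (schurComplementAt u (e 0))
        (e ∘ Fin.succ) (isUpperTriangular_schurComplementAt hu _)
        (he.comp (Fin.succ_injective _)) fun i => by
          rw [Function.comp_apply, schurComplementAt_apply_self hu (he.ne (Fin.succ_ne_zero i))]
          exact hpos _
    refine ⟨bordered 1 0 (fun i => u (e i.succ) (e 0) / u (e 0) (e 0)) L',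
      bordered (u (e 0) (e 0)) (fun j => u (e 0) (e j.succ)) 0 B',
      hL'.bordered _, fun i j hij hej => ?_, hB'.bordered hp _, ?_⟩
    · cases i using Fin.cases with
      | zero => exact absurd hij (Fin.not_lt_zero j)
      | succ i =>
        cases j using Fin.cases with
        | zero => simp [bordered, show u (e i.succ) (e 0) = 0 from hu hej]
        | succ j => simpa [bordered] using hpat' i j (Fin.succ_lt_succ_iff.1 hij) hej
    · ext i j
      have hbody := fun i j => congrFun (congrFun hfac' i) j
      simp only [submatrix_apply, mul_apply, Fin.sum_univ_succ] at hbody ⊢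
      cases i using Fin.cases <;> cases j using Fin.cases <;>
        simp only [bordered, of_apply, Fin.cons_zero, Fin.cons_succ, Pi.zero_apply, one_mul,
          zero_mul, mul_zero, Finset.sum_const_zero, add_zero, ← hbody, schurComplementAt,
          Function.comp_apply]
      · exact (div_mul_cancel₀ _ hp.ne').symm
      · ring

end LU

section Permuted

variable {n : ℕ} {M : Matrix (Fin n) (Fin n) ℝ}

lemma IsUpperPos.exists_submatrix_eq_unitLower_mul_upperPos (h : IsUpperPos M)
    (τ : Equiv.Perm (Fin n)) :
    ∃ L B, IsUnitLower L ∧ IsUnitUpper (L.submatrix ⇑τ⁻¹ ⇑τ⁻¹) ∧ IsUpperPos B ∧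
      M.submatrix τ τ = L * B := by
  obtain ⟨L, B, hL, hpat, hB, hfac⟩ := exists_submatrix_eq_unitLower_mul_upperPos_of_injective M τ
    h.isUpperTriangular τ.injective fun i => h.2 _
  refine ⟨L, B, hL, ⟨fun i => hL.1 _, fun x y hyx => ?_⟩, hB, hfac⟩
  rcases lt_trichotomy (τ⁻¹ x) (τ⁻¹ y) with hxy | hxy | hxy
  · exact hL.2 _ _ hxy
  · exact absurd (τ⁻¹.injective hxy) hyx.ne'
  · exact hpat _ _ hxy (by simpa using hyx)

lemma IsUpperPos.exists_submatrix_eq_upperPos_mul_unitLower (h : IsUpperPos M)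
    (τ : Equiv.Perm (Fin n)) :
    ∃ B L, IsUpperPos B ∧ IsUnitLower L ∧ IsUnitUpper (L.submatrix ⇑τ⁻¹ ⇑τ⁻¹) ∧
      M.submatrix τ τ = B * L := by
  obtain ⟨L, B, hL, hLτ, hB, hfac⟩ := h.inv.exists_submatrix_eq_unitLower_mul_upperPos τ
  refine ⟨B⁻¹, L⁻¹, hB.inv, hL.inv, ?_, ?_⟩
  · rw [← inv_submatrix_equiv]
    exact hLτ.inv
  · rw [← Matrix.mul_inv_rev, ← hfac, inv_submatrix_equiv, nonsing_inv_nonsing_inv _ h.isUnit_det]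

lemma exists_upperPos_mul_unitLower_of_transpose_mul_self {k l c : Matrix (Fin n) (Fin n) ℝ}
    (hk : kᵀ * k = 1) (hl : IsUnitLower l) (hc : IsUpperPos c) (h : l = k * c) :
    ∃ u l₀, IsUpperPos u ∧ IsUnitLower l₀ ∧ k = u * l₀ := by
  have hkt : kᵀ = c * l⁻¹ := by
    rw [← mul_nonsing_inv_cancel_right l kᵀ hl.isUnit_det, h, ← mul_assoc, hk, one_mul]
  obtain ⟨m, d, hm, hd, rfl⟩ := hc.exists_unitUpper_mul_posDiagonal
  refine ⟨(l⁻¹)ᵀ * dᵀ, mᵀ, hl.inv.transpose.isUpperPos.mul hd.transpose.isUpperPos,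
    hm.transpose, ?_⟩
  rw [← transpose_transpose k, hkt]
  simp only [transpose_mul, mul_assoc]

end Permuted

theorem stmt_4_general (n : ℕ) (σ : Equiv.Perm (Fin n))
    (k : Matrix (Fin n) (Fin n) ℝ) (hk : IsSO k) :
    (∃ l a m : Matrix (Fin n) (Fin n) ℝ,
        IsUnitLower l ∧ IsUnitUpper (permMat σ * l * (permMat σ)⁻¹) ∧
        IsPosDiagonal a ∧ IsUnitUpper m ∧ l = k * a * m) ↔
    ((∃ u l₀ : Matrix (Fin n) (Fin n) ℝ, IsUpperPos u ∧ IsUnitLower l₀ ∧ k = u * l₀) ∧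
      (∃ u' l' : Matrix (Fin n) (Fin n) ℝ, IsUpperPos u' ∧ IsUnitLower l' ∧
        IsUnitUpper ((permMat σ)⁻¹ * l' * permMat σ) ∧
        permMat σ * k * (permMat σ)⁻¹ = u' * l')) := by
  simp only [permMat_mul_mul_inv, inv_permMat_mul_mul]
  constructor
  · rintro ⟨l, a, m, hl, hlσ, ha, hm, hlk⟩
    have hc : IsUpperPos (a * m) := ha.isUpperPos.mul hm.isUpperPos
    rw [mul_assoc] at hlk
    refine ⟨exists_upperPos_mul_unitLower_of_transpose_mul_self hk.1 hl hc hlk, ?_⟩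
    obtain ⟨B, L, hB, hL, hLσ, hfac⟩ := hc.inv.exists_submatrix_eq_upperPos_mul_unitLower σ⁻¹
    refine ⟨l.submatrix ⇑σ⁻¹ ⇑σ⁻¹ * B, L, hlσ.isUpperPos.mul hB, hL, by simpa using hLσ, ?_⟩
    rw [mul_assoc, ← hfac, submatrix_mul_equiv, hlk,
      mul_nonsing_inv_cancel_right _ _ hc.isUnit_det]
  · rintro ⟨-, u', l', hu', -, hl'σ, hK⟩
    obtain ⟨L, B, hL, hLσ, hB, hfac⟩ := hu'.exists_submatrix_eq_unitLower_mul_upperPos σ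
    have hBl' : IsUpperPos (B * l'.submatrix σ σ) := hB.mul hl'σ.isUpperPos
    obtain ⟨a, m, ha, hm, ham⟩ := hBl'.inv.exists_posDiagonal_mul_unitUpper
    have hkL : k = L * (B * l'.submatrix σ σ) := by
      rw [← mul_assoc, ← hfac, submatrix_mul_equiv, ← hK]
      simp
    refine ⟨L, a, m, hL, by simpa using hLσ, ha, hm, ?_⟩
    rw [mul_assoc, ← ham, hkL, mul_nonsing_inv_cancel_right _ _ hBl'.isUnit_det]

theorem stmt_4 (n : ℕ) (hn : 1 ≤ n) (σ : Equiv.Perm (Fin n))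
    (k : Matrix (Fin n) (Fin n) ℝ) (hk : IsSO k) :
    (∃ l a m : Matrix (Fin n) (Fin n) ℝ,
        IsUnitLower l ∧ IsUnitUpper (permMat σ * l * (permMat σ)⁻¹) ∧
        IsPosDiagonal a ∧ IsUnitUpper m ∧ l = k * a * m) ↔
    ((∃ u l₀ : Matrix (Fin n) (Fin n) ℝ, IsUpperPos u ∧ IsUnitLower l₀ ∧ k = u * l₀) ∧
      (∃ u' l' : Matrix (Fin n) (Fin n) ℝ, IsUpperPos u' ∧ IsUnitLower l' ∧
        IsUnitUpper ((permMat σ)⁻¹ * l' * permMat σ) ∧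
        permMat σ * k * (permMat σ)⁻¹ = u' * l')) :=
  stmt_4_general n σ k hk
end

section
/- Let n ≥ 1 and let p be a profile. If f : ℝ → M_n(ℝ) is differentiable with f′(t) = S(f(t)) for all t ∈ ℝ and f(0) has profile p, then f(t) has profile p for all t ∈ ℝ. -/
open Matrix

attribute [local instance] Matrix.normedAddCommGroup Matrix.normedSpace

/-- A profile: a set of index pairs `(i,j)` with `j < i`, closed under moving
towards the diagonal. -/
def IsProfile {n : ℕ} (p : Set (Fin n × Fin n)) : Prop :=
  (∀ ij ∈ p, ij.2 < ij.1) ∧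
  ∀ ij ∈ p, ∀ i' j' : Fin n, j' < i' → i' ≤ ij.1 → ij.2 ≤ j' → (i', j') ∈ p

/-- `M` has profile `p` if all its strictly lower triangular entries outside `p` vanish. -/
def HasProfile {n : ℕ} (M : Matrix (Fin n) (Fin n) ℝ) (p : Set (Fin n × Fin n)) : Prop :=
  ∀ i j : Fin n, j < i → (i, j) ∉ p → M i j = 0

/-- The upper triangular part `π_u(M)` of the decomposition of `M` into a
skew-symmetric plus an upper triangular matrix. -/
def piu {n : ℕ} (M : Matrix (Fin n) (Fin n) ℝ) : Matrix (Fin n) (Fin n) ℝ :=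
  Matrix.of fun i j => if i < j then M i j + M j i else if i = j then M i j else 0

/-- The vector field `S(X) = [X, π_u([X, Xᵀ])]`. -/
def Svf {n : ℕ} (X : Matrix (Fin n) (Fin n) ℝ) : Matrix (Fin n) (Fin n) ℝ :=
  X * piu (X * Xᵀ - Xᵀ * X) - piu (X * Xᵀ - Xᵀ * X) * X

/-! Let `Y t` be the part of `f t` strictly below the diagonal and outside `p`. The matrix
`A = π_u([X, Xᵀ])` is upper triangular, and the complement of a profile is closed under moving
away from the diagonal, so the off-profile entries of `S(X) = XA - AX` only involve the
off-profile entries of `X`. Hence `‖Y'‖ ≤ K(t) ‖Y‖` with `K` continuous, and Grönwall's inequality,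
run forwards and backwards in time, turns `Y 0 = 0` into `Y ≡ 0`. -/

open scoped Classical

section Gronwall

variable {E : Type*} [NormedAddCommGroup E] [NormedSpace ℝ E] {g g' : ℝ → E} {K : ℝ → ℝ}

theorem eq_zero_of_norm_deriv_le_mul_norm_of_nonneg (hK : Continuous K)
    (hg : ∀ t, HasDerivAt g (g' t) t) (bound : ∀ t, ‖g' t‖ ≤ K t * ‖g t‖) (h0 : g 0 = 0)
    {t : ℝ} (ht : 0 ≤ t) : g t = 0 := by
  obtain ⟨C, hC⟩ := isCompact_Icc.exists_bound_of_continuousOn (hK.continuousOn (s := Set.Icc 0 t))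
  have hgc : Continuous g := continuous_iff_continuousAt.2 fun s => (hg s).continuousAt
  refine eq_zero_of_abs_deriv_le_mul_abs_self_of_eq_zero_right (K := C) hgc.continuousOn
    (fun s _ => (hg s).hasDerivWithinAt) h0 (fun s hs => ?_) t ⟨ht, le_rfl⟩
  calc ‖g' s‖ ≤ K s * ‖g s‖ := bound s
    _ ≤ C * ‖g s‖ := mul_le_mul_of_nonneg_right
      ((Real.le_norm_self _).trans (hC s (Set.Ico_subset_Icc_self hs))) (norm_nonneg _)

theorem eq_zero_of_norm_deriv_le_mul_norm (hK : Continuous K)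
    (hg : ∀ t, HasDerivAt g (g' t) t) (bound : ∀ t, ‖g' t‖ ≤ K t * ‖g t‖) (h0 : g 0 = 0)
    (t : ℝ) : g t = 0 := by
  rcases le_total 0 t with ht | ht
  · exact eq_zero_of_norm_deriv_le_mul_norm_of_nonneg hK hg bound h0 ht
  · have hg_neg (s : ℝ) : HasDerivAt (fun s => g (-s)) (-g' (-s)) s := by
      simpa [Function.comp_def] using (hg (-s)).scomp s (hasDerivAt_neg s)
    simpa using eq_zero_of_norm_deriv_le_mul_norm_of_nonneg (hK.comp continuous_neg) hg_neg
      (fun s => by simpa using bound (-s)) (by simpa using h0) (neg_nonneg.2 ht)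

end Gronwall

theorem Matrix.norm_mul_le_card_mul {l m n α : Type*} [Fintype l] [Fintype m] [Fintype n]
    [NonUnitalNormedRing α] (A : Matrix l m α) (B : Matrix m n α) :
    ‖A * B‖ ≤ Fintype.card m * (‖A‖ * ‖B‖) := by
  refine (norm_le_iff (by positivity)).2 fun i j => ?_
  calc ‖(A * B) i j‖ ≤ ∑ k, ‖A i k * B k j‖ := norm_sum_le _ _
    _ ≤ ∑ _k : m, ‖A‖ * ‖B‖ := Finset.sum_le_sum fun k _ => (norm_mul_le _ _).trans
      (mul_le_mul (norm_entry_le_entrywise_sup_norm A) (norm_entry_le_entrywise_sup_norm B)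
        (norm_nonneg _) (norm_nonneg _))
    _ = Fintype.card m * (‖A‖ * ‖B‖) := by simp

section Profile

variable {n : ℕ}

noncomputable def offProfile (p : Set (Fin n × Fin n)) :
    Matrix (Fin n) (Fin n) ℝ →ₗ[ℝ] Matrix (Fin n) (Fin n) ℝ where
  toFun M := Matrix.of fun i j => if j < i ∧ (i, j) ∉ p then M i j else 0
  map_add' M N := by ext i j; simp only [of_apply, Matrix.add_apply]; split_ifs <;> simp
  map_smul' c M := by ext i j; simp only [of_apply, Matrix.smul_apply]; split_ifs <;> simp

variable {p : Set (Fin n × Fin n)}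

theorem offProfile_apply (M : Matrix (Fin n) (Fin n) ℝ) (i j : Fin n) :
    offProfile p M i j = if j < i ∧ (i, j) ∉ p then M i j else 0 := rfl

theorem hasProfile_iff_offProfile_eq_zero {M : Matrix (Fin n) (Fin n) ℝ} :
    HasProfile M p ↔ offProfile p M = 0 := by
  constructor
  · intro h
    ext i j
    rw [offProfile_apply]
    split_ifs with hij
    exacts [h i j hij.1 hij.2, rfl]
  · intro h i j hij hnp
    simpa [offProfile_apply, hij, hnp] using congr_fun (congr_fun h i) j

theorem norm_offProfile_le (M : Matrix (Fin n) (Fin n) ℝ) : ‖offProfile p M‖ ≤ ‖M‖ := by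
  refine (norm_le_iff (norm_nonneg _)).2 fun i j => ?_
  rw [offProfile_apply]
  split_ifs
  · exact norm_entry_le_entrywise_sup_norm M
  · simp

theorem IsProfile.offProfile_mul_blockTriangular (hp : IsProfile p)
    {A : Matrix (Fin n) (Fin n) ℝ} (hA : A.BlockTriangular id) (X : Matrix (Fin n) (Fin n) ℝ) :
    offProfile p (X * A) = offProfile p (offProfile p X * A) := by
  ext i j
  simp only [offProfile_apply, mul_apply]
  split_ifs with hij
  · refine Finset.sum_congr rfl fun k _ => ?_
    rcases le_or_gt k j with hkj | hjk
    · rw [if_pos ⟨hkj.trans_lt hij.1, fun hk => hij.2 (hp.2 _ hk i j hij.1 le_rfl hkj)⟩]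
    · simp [hA hjk]
  · rfl

theorem IsProfile.offProfile_blockTriangular_mul (hp : IsProfile p)
    {A : Matrix (Fin n) (Fin n) ℝ} (hA : A.BlockTriangular id) (X : Matrix (Fin n) (Fin n) ℝ) :
    offProfile p (A * X) = offProfile p (A * offProfile p X) := by
  ext i j
  simp only [offProfile_apply, mul_apply]
  split_ifs with hij
  · refine Finset.sum_congr rfl fun k _ => ?_
    rcases le_or_gt i k with hik | hki
    · rw [if_pos ⟨hij.1.trans_le hik, fun hk => hij.2 (hp.2 _ hk i j hij.1 hik le_rfl)⟩]
    · simp [hA hki]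
  · rfl

theorem blockTriangular_piu (M : Matrix (Fin n) (Fin n) ℝ) : (piu M).BlockTriangular id := by
  intro i j (hij : j < i)
  simp only [piu, of_apply, if_neg (lt_asymm hij), if_neg hij.ne']

theorem continuous_piu : Continuous (piu : Matrix (Fin n) (Fin n) ℝ → _) := by
  refine continuous_pi fun i => continuous_pi fun j => ?_
  simp only [piu, of_apply]
  split_ifs <;> fun_prop

theorem IsProfile.norm_offProfile_svf_le (hp : IsProfile p) (X : Matrix (Fin n) (Fin n) ℝ) :
    ‖offProfile p (Svf X)‖ ≤ 2 * n * ‖piu (X * Xᵀ - Xᵀ * X)‖ * ‖offProfile p X‖ := by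
  set A := piu (X * Xᵀ - Xᵀ * X)
  have hA : A.BlockTriangular id := blockTriangular_piu _
  set Y := offProfile p X
  have hSvf : offProfile p (Svf X) = offProfile p (Y * A - A * Y) := by
    rw [Svf, map_sub, map_sub, hp.offProfile_mul_blockTriangular hA,
      hp.offProfile_blockTriangular_mul hA]
  calc ‖offProfile p (Svf X)‖ ≤ ‖Y * A - A * Y‖ := hSvf ▸ norm_offProfile_le _
    _ ≤ ‖Y * A‖ + ‖A * Y‖ := norm_sub_le _ _
    _ ≤ n * (‖Y‖ * ‖A‖) + n * (‖A‖ * ‖Y‖) := by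
      gcongr
      · simpa using norm_mul_le_card_mul Y A
      · simpa using norm_mul_le_card_mul A Y
    _ = 2 * n * ‖A‖ * ‖Y‖ := by ring

end Profile

theorem stmt_19_general (n : ℕ) (p : Set (Fin n × Fin n)) (hp : IsProfile p)
    (f : ℝ → Matrix (Fin n) (Fin n) ℝ)
    (hf : ∀ t : ℝ, HasDerivAt f (Svf (f t)) t)
    (h0 : HasProfile (f 0) p) :
    ∀ t : ℝ, HasProfile (f t) p := by
  have hfc : Continuous f := continuous_iff_continuousAt.2 fun t => (hf t).continuousAt
  let P := LinearMap.toContinuousLinearMap (offProfile p)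
  intro t
  rw [hasProfile_iff_offProfile_eq_zero] at h0 ⊢
  refine eq_zero_of_norm_deriv_le_mul_norm (g := fun s => P (f s))
    (K := fun s => 2 * n * ‖piu (f s * (f s)ᵀ - (f s)ᵀ * f s)‖) ?_
    (fun s => P.hasFDerivAt.comp_hasDerivAt s (hf s)) (fun s => hp.norm_offProfile_svf_le (f s))
    h0 t
  exact continuous_const.mul (continuous_piu.comp
    ((hfc.matrix_mul hfc.matrix_transpose).sub (hfc.matrix_transpose.matrix_mul hfc))).norm

theorem stmt_19 (n : ℕ) (hn : 1 ≤ n) (p : Set (Fin n × Fin n)) (hp : IsProfile p)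
    (f : ℝ → Matrix (Fin n) (Fin n) ℝ)
    (hf : ∀ t : ℝ, HasDerivAt f (Svf (f t)) t)
    (h0 : HasProfile (f 0) p) :
    ∀ t : ℝ, HasProfile (f t) p :=
  stmt_19_general n p hp f hf h0
end
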